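/- arXiv:1206.0634 — 5 statements merged into one kernel-verified Lean document; each statement's English description precedes it below -/
import Mathlib

section
/- Let p be an odd prime, q a power of p, and K a finite field with q² elements. Then the set {(x, y) ∈ K × K : x·y^q + y·x^q = 1} has exactly q·(q² − 1) elements. -/
/-!
With `q = p ^ n` and `|K| = q²`, the map `T z = z + z ^ q` is additive, and for `x ≠ 0` the
substitution `z = y x^q` turns `x y^q + y x^q` into `T z`, so each fibre of the first projection
over `x ≠ 0` has as many points as `T⁻¹(1)`. The kernel of `T` and its image (which lies in
`{w | w ^ q = w}`) are both solution sets of polynomial equations of degree `q`, so both have at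
most `q` elements; as their sizes multiply to `q²`, both have exactly `q`. Hence `1` is in the
image and `|T⁻¹(1)| = q`. The point `x = 0` contributes nothing, giving `(q² - 1) q`.
-/

open Polynomial Finset

theorem card_filter_pow_eq_mul_le {K : Type*} [Field K] [Fintype K] [DecidableEq K]
    {q : ℕ} (hq : 2 ≤ q) (c : K) : #{z : K | z ^ q = c * z} ≤ q := by
  have hdeg : (X ^ q - C c * X : K[X]).natDegree = q := by
    rw [natDegree_sub_eq_left_of_natDegree_lt] <;> rw [natDegree_X_pow]
    exact (natDegree_C_mul_le _ _).trans_lt (by rw [natDegree_X]; omega)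
  have hne : (X ^ q - C c * X : K[X]) ≠ 0 := by
    intro h; rw [h, natDegree_zero] at hdeg; omega
  refine (card_le_degree_of_subset_roots fun z hz => ?_).trans hdeg.le
  rw [mem_roots hne]
  simpa [sub_eq_zero] using (mem_filter.mp hz).2

namespace AddMonoidHom

variable {G M : Type*} [AddGroup G] [Fintype G] [AddMonoid M] [DecidableEq M]

theorem card_image_mul_card_fiber_zero (f : G →+ M) :
    #(univ.image f) * #{g | f g = 0} = Fintype.card G := by
  rw [← card_univ, card_eq_sum_card_image f univ, ← smul_eq_mul, ← sum_const]
  refine sum_congr rfl fun y hy => card_fiber_eq_of_mem_range f ⟨0, map_zero f⟩ ?_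
  simpa using hy

theorem card_fiber_eq_of_image_subset (f : G →+ M) {S : Finset M} {q : ℕ}
    (hG : Fintype.card G = q * q) (hfiber : #{g | f g = 0} ≤ q) (hS : #S ≤ q)
    (hfS : ∀ g, f g ∈ S) {y : M} (hy : y ∈ S) : #{g | f g = y} = q := by
  have himage : univ.image f ⊆ S := by simpa [image_subset_iff] using hfS
  have hprod := card_image_mul_card_fiber_zero f
  have hpos : 0 < #(univ.image f) := by simp
  have hcard_image : #(univ.image f) = q := by
    have := card_le_card himage
    nlinarith
  have hy' : y ∈ univ.image f := by
    rwa [eq_of_subset_of_card_le himage (by omega)]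
  rw [card_fiber_eq_of_mem_range f (by simpa using hy') ⟨0, map_zero f⟩]
  nlinarith

end AddMonoidHom

theorem FiniteField.pow_pow_eq_self_of_card_eq_sq {K : Type*} [Field K] [Fintype K] {q : ℕ}
    (hK : Fintype.card K = q ^ 2) (z : K) : (z ^ q) ^ q = z := by
  rw [← pow_mul, ← sq, ← hK, FiniteField.pow_card]

theorem FiniteField.two_le_of_card_eq_sq {K : Type*} [Field K] [Fintype K] {q : ℕ}
    (hK : Fintype.card K = q ^ 2) : 2 ≤ q := by
  have : 1 ^ 2 < q ^ 2 := by rw [one_pow, ← hK]; exact Fintype.one_lt_card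
  exact lt_of_pow_lt_pow_left₀ 2 q.zero_le this

section FrobeniusTrace

variable (K : Type*) [Field K] (p n : ℕ) [ExpChar K p]

def frobeniusTrace : K →+ K := AddMonoidHom.id K + (iterateFrobenius K p n : K →+ K)

variable {K p n}

theorem frobeniusTrace_apply (z : K) : frobeniusTrace K p n z = z + z ^ p ^ n := rfl

variable [Fintype K] (hK : Fintype.card K = (p ^ n) ^ 2)
include hK

theorem frobeniusTrace_pow (z : K) :
    frobeniusTrace K p n z ^ p ^ n = frobeniusTrace K p n z := by
  rw [frobeniusTrace_apply, ← iterateFrobenius_def, map_add, iterateFrobenius_def,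
    iterateFrobenius_def, FiniteField.pow_pow_eq_self_of_card_eq_sq hK, add_comm]

theorem frobeniusTrace_mul_pow (x y : K) :
    frobeniusTrace K p n (y * x ^ p ^ n) = x * y ^ p ^ n + y * x ^ p ^ n := by
  rw [frobeniusTrace_apply, mul_pow, FiniteField.pow_pow_eq_self_of_card_eq_sq hK, add_comm,
    mul_comm x]

theorem card_fiber_frobeniusTrace_one [DecidableEq K] :
    #{z | frobeniusTrace K p n z = 1} = p ^ n := by
  have hq := FiniteField.two_le_of_card_eq_sq hK
  refine AddMonoidHom.card_fiber_eq_of_image_subset _ (S := {w | w ^ p ^ n = 1 * w})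
    (by rw [hK, sq]) ?_ (card_filter_pow_eq_mul_le hq 1) (fun z => ?_) (by simp)
  · simpa [frobeniusTrace_apply, add_eq_zero_iff_neg_eq, eq_comm] using
      card_filter_pow_eq_mul_le hq (-1 : K)
  · simpa using frobeniusTrace_pow hK z

theorem card_hermitian_fiber [DecidableEq K] {x : K} (hx : x ≠ 0) :
    #{y | x * y ^ p ^ n + y * x ^ p ^ n = 1} = p ^ n := by
  refine .trans (card_equiv (Equiv.mulRight₀ (x ^ p ^ n) (pow_ne_zero _ hx)) fun y => ?_)
    (card_fiber_frobeniusTrace_one hK)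
  simp [frobeniusTrace_mul_pow hK]

end FrobeniusTrace

theorem card_hermitian_sphere_general (p q : ℕ) (hp : p.Prime)
    (hq : ∃ n : ℕ, 0 < n ∧ q = p ^ n)
    (K : Type*) [Field K] [Fintype K] (hK : Fintype.card K = q ^ 2) :
    Nat.card {v : K × K // v.1 * v.2 ^ q + v.2 * v.1 ^ q = 1} = q * (q ^ 2 - 1) := by
  classical
  obtain ⟨n, -, rfl⟩ := hq
  have : Fact p.Prime := ⟨hp⟩
  have : CharP K p := charP_of_card_eq_prime_pow (f := n * 2) (by rw [hK, pow_mul])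
  have hfiber (x : K) :
      #{y | x * y ^ p ^ n + y * x ^ p ^ n = 1} = if x = 0 then 0 else p ^ n := by
    split_ifs with hx
    · simp [hx, zero_pow (pow_pos hp.pos n).ne']
    · exact card_hermitian_fiber hK hx
  rw [Nat.card_congr (Equiv.subtypeProdEquivSigmaSubtype fun x y : K =>
      x * y ^ p ^ n + y * x ^ p ^ n = 1), Nat.card_eq_fintype_card, Fintype.card_sigma]
  simp only [Fintype.card_subtype, hfiber]
  rw [sum_ite, sum_const_zero, zero_add, sum_const, smul_eq_mul, filter_ne',
    card_erase_of_mem (mem_univ _), card_univ, hK, mul_comm]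

/-- Let `q` be a power of an odd prime `p` and `K` a finite field with `q²` elements.
Then the set `{(x,y) ∈ K × K : x·y^q + y·x^q = 1}` has exactly `q·(q² − 1)` elements. -/
theorem card_hermitian_sphere (p q : ℕ) (hp : p.Prime) (hp2 : p ≠ 2)
    (hq : ∃ n : ℕ, 0 < n ∧ q = p ^ n)
    (K : Type*) [Field K] [Fintype K] (hK : Fintype.card K = q ^ 2) :
    Nat.card {v : K × K // v.1 * v.2 ^ q + v.2 * v.1 ^ q = 1} = q * (q ^ 2 - 1) :=
  card_hermitian_sphere_general p q hp hq K hK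
end

section
/- Let p be an odd prime, q a power of p, and K a finite field with q² elements. Then the set of nonzero vectors (a, b, c) ∈ K³ satisfying −a·c^q − c·a^q + b^{q+1} = 0 has exactly (q³ + 1)(q² − 1) elements; equivalently, the Hermitian form ⟨(a,b,c),(a',b',c')⟩ = −a·(c')^q − c·(a')^q + b·(b')^q on K³ has exactly q³ + 1 isotropic lines (one-dimensional subspaces on which the form vanishes). -/
/-!
Write `σ x = x ^ q`; since `|K| = q²`, `σ` is an involutive field automorphism. On `v = (a, b, c)`
the form is `⟨v, v⟩ = b σ(b) - T(a σ(c))` with `T y = y + σ y`. If `c = 0`, then `v` is isotropic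
iff `b = 0`, which gives `q²` vectors. If `c ≠ 0`, then `a ↦ a σ(c)` is a bijection, and `T` is an
additive map onto the fixed field of `σ` whose fibres all have `q` elements; so each of the
`q²(q² - 1)` pairs `(b, c)` admits exactly `q` values of `a`. Hence there are
`q² + q³(q² - 1) = (q³ + 1)(q² - 1) + 1` isotropic vectors. Isotropy is invariant under scaling, and
each isotropic line contains `q² - 1` nonzero vectors.
-/

/-- The Hermitian form `⟨v,w⟩ = −v₁·w₃^q − v₃·w₁^q + v₂·w₂^q` on `K³`. -/
def hermForm {K : Type*} [Field K] (q : ℕ) (v w : Fin 3 → K) : K :=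
  -(v 0 * (w 2) ^ q) - v 2 * (w 0) ^ q + v 1 * (w 1) ^ q

open Finset Polynomial Module

section HermForm

variable {K : Type*} [Field K] {q : ℕ}

theorem hermForm_smul_smul (a : K) (v w : Fin 3 → K) :
    hermForm q (a • v) (a • w) = a * a ^ q * hermForm q v w := by
  simp only [hermForm, Pi.smul_apply, smul_eq_mul, mul_pow]
  ring

theorem hermForm_self_vecCons (a b c : K) :
    hermForm q ![a, b, c] ![a, b, c] = b * b ^ q - (a * c ^ q + c * a ^ q) := by
  simp only [hermForm, Matrix.cons_val]
  ring

end HermForm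

namespace FiniteField

variable {K : Type*} [Field K] [Fintype K] {q : ℕ}

theorem one_lt_of_card_eq_sq (hK : Fintype.card K = q ^ 2) : 1 < q := by
  have := hK ▸ Fintype.one_lt_card (α := K)
  by_contra! h
  interval_cases q <;> simp at this

theorem pow_pow_of_card_eq_sq (hK : Fintype.card K = q ^ 2) (x : K) : (x ^ q) ^ q = x := by
  rw [← pow_mul, ← sq, ← hK, FiniteField.pow_card]

theorem add_pow_of_card_eq_sq (hK : Fintype.card K = q ^ 2) (x y : K) :
    (x + y) ^ q = x ^ q + y ^ q := by
  obtain ⟨p, hchar⟩ := CharP.exists K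
  obtain ⟨m, hp, hcard⟩ := FiniteField.card K p
  have : Fact p.Prime := ⟨hp⟩
  obtain ⟨k, -, rfl⟩ : ∃ k ≤ (m : ℕ), q = p ^ k :=
    (Nat.dvd_prime_pow hp).1 (hcard ▸ hK ▸ Dvd.intro q (sq q).symm)
  exact add_pow_char_pow x y p k

variable [DecidableEq K]

theorem card_filter_pow_eq_mul_le (hq : 1 < q) (c : K) : #{x : K | x ^ q = c * x} ≤ q := by
  have hdeg : (X ^ q - C c * X : K[X]).natDegree = q := by
    rw [natDegree_sub_eq_left_of_natDegree_lt, natDegree_X_pow]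
    rw [natDegree_X_pow]
    exact (natDegree_C_mul_le c X).trans_lt (by rwa [natDegree_X])
  have hne : (X ^ q - C c * X : K[X]) ≠ 0 := ne_zero_of_natDegree_gt (hdeg ▸ hq)
  refine (card_le_degree_of_subset_roots fun x hx => ?_).trans hdeg.le
  simpa [mem_roots hne, sub_eq_zero] using hx

theorem card_filter_add_pow_eq (hK : Fintype.card K = q ^ 2) {s : K} (hs : s ^ q = s) :
    #{y : K | y + y ^ q = s} = q := by
  have hq := one_lt_of_card_eq_sq hK
  let T : K →+ K := AddMonoidHom.mk' (fun y => y + y ^ q) fun x y => by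
    rw [add_pow_of_card_eq_sq hK]; ring
  have hT (y : K) : T y = y + y ^ q := rfl
  -- The kernel of `T` lies among the roots of `X ^ q + X` and its image among those of
  -- `X ^ q - X`; as `|ker T| * |im T| = q²`, both bounds `≤ q` are equalities.
  have hker : #{y : K | T y = 0} ≤ q := by
    simpa [hT, add_eq_zero_iff_eq_neg'] using card_filter_pow_eq_mul_le hq (-1 : K)
  have himage_sub : univ.image T ⊆ ({x | x ^ q = x} : Finset K) := by
    simp [subset_iff, hT, add_pow_of_card_eq_sq hK, pow_pow_of_card_eq_sq hK, add_comm]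
  have himage : #(univ.image T) ≤ q :=
    (card_le_card himage_sub).trans (by simpa using card_filter_pow_eq_mul_le hq (1 : K))
  have hlagrange : #(univ.image T) * #{y : K | T y = 0} = q * q := by
    rw [← sq, ← hK, ← card_univ, card_eq_sum_card_image T univ, ← smul_eq_mul, ← sum_const]
    refine sum_congr rfl fun t ht => ?_
    exact (AddMonoidHom.card_fiber_eq_of_mem_range T (by simpa using ht) ⟨0, map_zero T⟩).symm
  obtain ⟨himage_eq, hker_eq⟩ : #(univ.image T) = q ∧ #{y : K | T y = 0} = q := by
    constructor <;> nlinarith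
  have hs_mem : s ∈ univ.image T := by
    rw [eq_of_subset_of_card_le himage_sub
      (by simpa [himage_eq] using card_filter_pow_eq_mul_le hq (1 : K))]
    simpa using hs
  exact (AddMonoidHom.card_fiber_eq_of_mem_range T (by simpa using hs_mem) ⟨0, map_zero T⟩).trans
    hker_eq

end FiniteField

section Isotropic

open FiniteField

variable {K : Type*} [Field K] [Fintype K] [DecidableEq K] {q : ℕ}

theorem card_isotropic_vecCons_of_ne_zero (hK : Fintype.card K = q ^ 2) (b : K) {c : K}
    (hc : c ≠ 0) : #{a : K | hermForm q ![a, b, c] ![a, b, c] = 0} = q := by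
  have hnorm : (b * b ^ q) ^ q = b * b ^ q := by
    rw [mul_pow, pow_pow_of_card_eq_sq hK, mul_comm]
  refine (card_equiv (Equiv.mulRight₀ (c ^ q) (pow_ne_zero q hc)) fun a => ?_).trans
    (card_filter_add_pow_eq hK hnorm)
  have hconj : (a * c ^ q) ^ q = c * a ^ q := by
    rw [mul_pow, pow_pow_of_card_eq_sq hK, mul_comm]
  simp [hermForm_self_vecCons, hconj, sub_eq_zero, eq_comm]

theorem card_isotropic_vecCons_zero (hq : q ≠ 0) (b : K) :
    #{a : K | hermForm q ![a, b, 0] ![a, b, 0] = 0} = if b = 0 then Fintype.card K else 0 := by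
  simp only [hermForm_self_vecCons, zero_pow hq, mul_zero, zero_mul, add_zero, sub_zero,
    mul_eq_zero, pow_eq_zero_iff hq, or_self, filter_const]
  split_ifs <;> simp

theorem card_isotropic (hK : Fintype.card K = q ^ 2) :
    #{v : Fin 3 → K | hermForm q v v = 0} = q ^ 2 + (q ^ 2 - 1) * q ^ 3 := by
  have hq := one_lt_of_card_eq_sq hK
  let e : (Fin 3 → K) ≃ (K × K) × K :=
    { toFun v := ((v 2, v 1), v 0)
      invFun x := ![x.2, x.1.2, x.1.1]
      left_inv v := by ext i; fin_cases i <;> rfl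
      right_inv x := rfl }
  have hsplit : #{v : Fin 3 → K | hermForm q v v = 0} =
      ∑ c : K, ∑ b : K, #{a : K | hermForm q ![a, b, c] ![a, b, c] = 0} := by
    rw [card_filter, ← e.symm.sum_comp]
    simp only [Fintype.sum_prod_type, card_filter]
    rfl
  have hzero : ∑ b : K, #{a : K | hermForm q ![a, b, 0] ![a, b, 0] = 0} = q ^ 2 := by
    simp [card_isotropic_vecCons_zero (by omega : q ≠ 0), hK]
  have hne_zero (c : K) (hc : c ∈ ({0}ᶜ : Finset K)) :
      ∑ b : K, #{a : K | hermForm q ![a, b, c] ![a, b, c] = 0} = q ^ 3 := by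
    simp only [card_isotropic_vecCons_of_ne_zero hK _ (by simpa using hc), sum_const, card_univ,
      hK, smul_eq_mul]
    ring
  rw [hsplit, Fintype.sum_eq_add_sum_compl 0, hzero, sum_congr rfl hne_zero, sum_const,
    card_compl, card_singleton, hK, smul_eq_mul]

theorem card_isotropic_ne_zero (hK : Fintype.card K = q ^ 2) :
    #{v : Fin 3 → K | v ≠ 0 ∧ hermForm q v v = 0} = (q ^ 3 + 1) * (q ^ 2 - 1) := by
  have hq := one_lt_of_card_eq_sq hK
  have herase : ({v | v ≠ 0 ∧ hermForm q v v = 0} : Finset (Fin 3 → K)) =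
      ({v | hermForm q v v = 0} : Finset (Fin 3 → K)).erase 0 := by
    ext v; simp
  have h1 : 1 ≤ q ^ 2 := Nat.one_le_pow _ _ (by omega)
  rw [herase, card_erase_of_mem (mem_filter.2 ⟨mem_univ _, by simp [hermForm]⟩),
    card_isotropic hK]
  zify [h1, h1.trans (Nat.le_add_right _ _)]
  ring

end Isotropic

section Lines

variable {K V : Type*} [Field K] [AddCommGroup V] [Module K V]

theorem natCard_ne_zero_of_finrank_eq_one [Finite V] (hV : finrank K V = 1) :
    Nat.card {v : V // v ≠ 0} = Nat.card K - 1 := by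
  classical
  have : Fintype V := Fintype.ofFinite V
  rw [Nat.card_eq_fintype_card, Fintype.card_subtype_compl, Fintype.card_subtype_eq,
    ← Nat.card_eq_fintype_card, Module.natCard_eq_pow_finrank (K := K), hV, pow_one]

theorem natCard_ne_zero_eq_natCard_lines_mul [Finite V] (P : V → Prop)
    (hP : ∀ (a : K) (v : V), P v → P (a • v)) :
    Nat.card {v : V // v ≠ 0 ∧ P v} =
      Nat.card {L : Submodule K V // finrank K L = 1 ∧ ∀ v ∈ L, P v} * (Nat.card K - 1) := by
  have : Fintype {L : Submodule K V // finrank K L = 1 ∧ ∀ v ∈ L, P v} := Fintype.ofFinite _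
  let g (v : {v : V // v ≠ 0 ∧ P v}) : {L : Submodule K V // finrank K L = 1 ∧ ∀ v ∈ L, P v} :=
    ⟨K ∙ v.1, finrank_span_singleton v.2.1, fun w hw => by
      obtain ⟨a, rfl⟩ := Submodule.mem_span_singleton.1 hw
      exact hP a _ v.2.2⟩
  have hfiber (L : {L : Submodule K V // finrank K L = 1 ∧ ∀ v ∈ L, P v}) :
      {v // g v = L} ≃ {w : L.1 // w ≠ 0} :=
    { toFun v := ⟨⟨v.1.1, congrArg Subtype.val v.2 ▸ Submodule.mem_span_singleton_self _⟩,
        fun h => v.1.2.1 (congrArg Subtype.val h)⟩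
      invFun w := ⟨⟨w.1, fun h => w.2 (Subtype.ext h), L.2.2 _ w.1.2⟩, Subtype.ext <|
        Submodule.eq_of_le_of_finrank_eq ((Submodule.span_singleton_le_iff_mem _ _).2 w.1.2) <|
          (finrank_span_singleton fun h => w.2 (Subtype.ext h)).trans L.2.1.symm⟩
      left_inv v := rfl
      right_inv w := rfl }
  have hcard (L) : Nat.card {v // g v = L} = Nat.card K - 1 :=
    (Nat.card_congr (hfiber L)).trans (natCard_ne_zero_of_finrank_eq_one L.2.1)
  rw [← Nat.card_congr (Equiv.sigmaFiberEquiv g), Nat.card_sigma]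
  simp only [hcard, sum_const, card_univ, smul_eq_mul, Nat.card_eq_fintype_card]

end Lines

theorem card_isotropic_vectors_and_lines_general (q : ℕ)
    (K : Type*) [Field K] [Fintype K] (hK : Fintype.card K = q ^ 2) :
    Nat.card {v : Fin 3 → K // v ≠ 0 ∧ hermForm q v v = 0} = (q ^ 3 + 1) * (q ^ 2 - 1) ∧
    Nat.card {L : Submodule K (Fin 3 → K) //
        Module.finrank K L = 1 ∧ ∀ v ∈ L, hermForm q v v = 0} = q ^ 3 + 1 := by
  classical
  have hvectors : Nat.card {v : Fin 3 → K // v ≠ 0 ∧ hermForm q v v = 0} =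
      (q ^ 3 + 1) * (q ^ 2 - 1) := by
    rw [Nat.card_eq_fintype_card, Fintype.card_subtype, card_isotropic_ne_zero hK]
  have hlines := natCard_ne_zero_eq_natCard_lines_mul (K := K)
    (fun v : Fin 3 → K => hermForm q v v = 0) fun a v h => by rw [hermForm_smul_smul, h, mul_zero]
  rw [hvectors, Nat.card_eq_fintype_card (α := K), hK] at hlines
  have hq2 : 0 < q ^ 2 - 1 :=
    Nat.sub_pos_of_lt (Nat.one_lt_pow two_ne_zero (FiniteField.one_lt_of_card_eq_sq hK))
  exact ⟨hvectors, (Nat.eq_of_mul_eq_mul_right hq2 hlines).symm⟩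

/-- Let `q` be a power of an odd prime `p` and `K` a finite field with `q²` elements.
The set of nonzero isotropic vectors for the Hermitian form
`⟨v,w⟩ = −v₁·w₃^q − v₃·w₁^q + v₂·w₂^q` on `K³` has exactly `(q³+1)(q²−1)` elements;
equivalently, the form has exactly `q³ + 1` isotropic lines. -/
theorem card_isotropic_vectors_and_lines (p q : ℕ) (hp : p.Prime) (hp2 : p ≠ 2)
    (hq : ∃ n : ℕ, 0 < n ∧ q = p ^ n)
    (K : Type*) [Field K] [Fintype K] (hK : Fintype.card K = q ^ 2) :
    Nat.card {v : Fin 3 → K // v ≠ 0 ∧ hermForm q v v = 0} = (q ^ 3 + 1) * (q ^ 2 - 1) ∧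
    Nat.card {L : Submodule K (Fin 3 → K) //
        Module.finrank K L = 1 ∧ ∀ v ∈ L, hermForm q v v = 0} = q ^ 3 + 1 :=
  card_isotropic_vectors_and_lines_general q K hK
end

section
/- Let F = ℚ(u) be the field of rational functions in one variable u over ℚ, and let V be the F-vector space with basis (L₁, L₂, L′). Let T : V → V be the F-linear operator with T L₁ = L₂ + L′, T L₂ = L₁ + L′, and T L′ = (u²−1)(L₁+L₂) + (u²−2)L′. Then (T + 1)(T − u²) = 0; the u²-eigenspace of T is the one-dimensional subspace spanned by L₁ + L₂ + L′; and the (−1)-eigenspace of T is the two-dimensional subspace spanned by (u²−1)L₁ − L′ and (u²−1)L₂ − L′. -/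
/-!
`L₁ + L₂ + L′` is a `u²`-eigenvector of `T`, and `(u²−1)L₁ − L′`, `(u²−1)L₂ − L′` are
`(−1)`-eigenvectors. As `u² ≠ ±1`, these three vectors span `V`: `(u²+1)L′` is
`(u²−1)(L₁+L₂+L′)` minus the other two, and then `(u²−1)Lᵢ` is `((u²−1)Lᵢ − L′) + L′`.
So `V` is the sum of a `u²`-eigenline and a `(−1)`-eigenplane. Eigenspaces for distinct
eigenvalues meet trivially, so by the modular law each eigenspace is exactly the given span; the
count `3 ≤ 1 + 2` fixes the dimensions, and `(T+1)(T−u²)` kills both summands.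
-/

noncomputable def u : RatFunc ℚ := RatFunc.X

namespace Module.End

variable {K V : Type*} [Field K] [AddCommGroup V] [Module K V] (f : End K V) {μ ν : K}
  {P Q : Submodule K V}

theorem eigenspace_eq_of_sup_eq_top (hμν : μ ≠ ν) (hP : P ≤ f.eigenspace μ)
    (hQ : Q ≤ f.eigenspace ν) (hPQ : P ⊔ Q = ⊤) : f.eigenspace μ = P := by
  have hdisj : f.eigenspace μ ⊓ Q = ⊥ :=
    eq_bot_iff.2 fun x hx => (f.disjoint_genEigenspace hμν 1 1).le_bot ⟨hx.1, hQ hx.2⟩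
  calc f.eigenspace μ = (P ⊔ Q) ⊓ f.eigenspace μ := by rw [hPQ, top_inf_eq]
    _ = P := by rw [sup_inf_assoc_of_le Q hP, inf_comm, hdisj, sup_bot_eq]

theorem comp_sub_smul_id_eq_zero_of_sup_eq_top (hP : P ≤ f.eigenspace μ)
    (hQ : Q ≤ f.eigenspace ν) (hPQ : P ⊔ Q = ⊤) :
    (f - ν • LinearMap.id) ∘ₗ (f - μ • LinearMap.id) = 0 := by
  refine LinearMap.ker_eq_top.1 (top_le_iff.1 (hPQ ▸ sup_le (fun x hx => ?_) fun x hx => ?_))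
  · have := mem_eigenspace_iff.1 (hP hx)
    simp [this]
  · have := mem_eigenspace_iff.1 (hQ hx)
    simp [this, smul_sub, smul_smul, mul_comm]

end Module.End

theorem Submodule.finrank_eq_of_sup_eq_top {K V : Type*} [Field K] [AddCommGroup V] [Module K V]
    [FiniteDimensional K V] {P Q : Submodule K V} {m n : ℕ} (hP : Module.finrank K P ≤ m)
    (hQ : Module.finrank K Q ≤ n) (hPQ : P ⊔ Q = ⊤) (hV : Module.finrank K V = m + n) :
    Module.finrank K P = m ∧ Module.finrank K Q = n := by
  have := Submodule.finrank_add_le_finrank_add_finrank P Q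
  rw [hPQ, finrank_top, hV] at this
  omega

open Polynomial in
theorem u_sq_ne_algebraMap (c : ℚ) : u ^ 2 ≠ algebraMap ℚ (RatFunc ℚ) c := by
  rw [Ne, ← sub_eq_zero, u, ← RatFunc.algebraMap_X, ← map_pow,
    IsScalarTower.algebraMap_apply ℚ ℚ[X] (RatFunc ℚ), ← C_eq_algebraMap, ← map_sub]
  exact RatFunc.algebraMap_ne_zero (X_pow_sub_C_ne_zero two_pos c)

namespace HeckeTwoImaginaryII

variable {K V : Type*} [Field K] [AddCommGroup V] [Module K V] {t : K}
  (b : Module.Basis (Fin 3) K V) {T : Module.End K V}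

theorem span_sum_le_eigenspace (h1 : T (b 0) = b 1 + b 2) (h2 : T (b 1) = b 0 + b 2)
    (h3 : T (b 2) = (t - 1) • (b 0 + b 1) + (t - 2) • b 2) :
    K ∙ (b 0 + b 1 + b 2) ≤ T.eigenspace t := by
  rw [Submodule.span_singleton_le_iff_mem, Module.End.mem_eigenspace_iff, map_add, map_add,
    h1, h2, h3]
  module

theorem span_pair_le_eigenspace_neg_one (h1 : T (b 0) = b 1 + b 2) (h2 : T (b 1) = b 0 + b 2)
    (h3 : T (b 2) = (t - 1) • (b 0 + b 1) + (t - 2) • b 2) :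
    Submodule.span K {(t - 1) • b 0 - b 2, (t - 1) • b 1 - b 2} ≤ T.eigenspace (-1) := by
  simp only [Submodule.span_le, Set.insert_subset_iff, Set.singleton_subset_iff, SetLike.mem_coe,
    Module.End.mem_eigenspace_iff, map_sub, map_smul, h1, h2, h3]
  constructor <;> module

theorem span_sup_span_eq_top (ht₁ : t ≠ 1) (ht₂ : t ≠ -1) :
    (K ∙ (b 0 + b 1 + b 2)) ⊔ Submodule.span K {(t - 1) • b 0 - b 2, (t - 1) • b 1 - b 2} = ⊤ := by
  rw [← Submodule.span_insert, eq_top_iff, ← b.span_eq, Submodule.span_le, Set.range_subset_iff]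
  set S := Submodule.span K {b 0 + b 1 + b 2, (t - 1) • b 0 - b 2, (t - 1) • b 1 - b 2}
  have hv : b 0 + b 1 + b 2 ∈ S := Submodule.subset_span (by simp)
  have hw₀ : (t - 1) • b 0 - b 2 ∈ S := Submodule.subset_span (by simp)
  have hw₁ : (t - 1) • b 1 - b 2 ∈ S := Submodule.subset_span (by simp)
  have h₂ : b 2 ∈ S := by
    rw [← S.smul_mem_iff (sub_ne_zero.2 ht₂ : t - -1 ≠ 0)]
    convert S.sub_mem (S.sub_mem (S.smul_mem (t - 1) hv) hw₀) hw₁ using 1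
    module
  have hb (i : Fin 3) (hw : (t - 1) • b i - b 2 ∈ S) : b i ∈ S := by
    rw [← S.smul_mem_iff (sub_ne_zero.2 ht₁)]
    simpa using S.add_mem hw h₂
  intro i
  fin_cases i
  exacts [hb 0 hw₀, hb 1 hw₁, h₂]

end HeckeTwoImaginaryII

open HeckeTwoImaginaryII Module.End in
/-- Formulas (7.6)(e′) and (7.6)(f′) of Lusztig–Vogan: on the `ℚ(u)`-vector space with
basis `(L₁, L₂, L′)`, the operator with `T L₁ = L₂ + L′`, `T L₂ = L₁ + L′`,
`T L′ = (u²−1)(L₁+L₂) + (u²−2)L′` satisfies `(T+1)(T−u²) = 0`, its `u²`-eigenspace is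
the one-dimensional span of `L₁+L₂+L′`, and its `(−1)`-eigenspace is the two-dimensional
span of `(u²−1)L₁ − L′` and `(u²−1)L₂ − L′`. -/
theorem hecke_type_two_imaginary_I_I (V : Type*) [AddCommGroup V]
    [Module (RatFunc ℚ) V] (b : Module.Basis (Fin 3) (RatFunc ℚ) V)
    (T : V →ₗ[RatFunc ℚ] V)
    (h1 : T (b 0) = b 1 + b 2)
    (h2 : T (b 1) = b 0 + b 2)
    (h3 : T (b 2) = (u ^ 2 - 1) • (b 0 + b 1) + (u ^ 2 - 2) • b 2) :
    (T + LinearMap.id) ∘ₗ (T - u ^ 2 • LinearMap.id) = 0 ∧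
    Module.End.eigenspace T (u ^ 2) = Submodule.span (RatFunc ℚ) {b 0 + b 1 + b 2} ∧
    Module.finrank (RatFunc ℚ) (Module.End.eigenspace T (u ^ 2)) = 1 ∧
    Module.End.eigenspace T (-1) =
      Submodule.span (RatFunc ℚ) {(u ^ 2 - 1) • b 0 - b 2, (u ^ 2 - 1) • b 1 - b 2} ∧
    Module.finrank (RatFunc ℚ) (Module.End.eigenspace T (-1)) = 2 := by
  have ht₁ : u ^ 2 ≠ 1 := by simpa using u_sq_ne_algebraMap 1
  have ht₂ : u ^ 2 ≠ -1 := by simpa using u_sq_ne_algebraMap (-1)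
  have hP := span_sum_le_eigenspace b h1 h2 h3
  have hQ := span_pair_le_eigenspace_neg_one b h1 h2 h3
  have hPQ := span_sup_span_eq_top b ht₁ ht₂
  have hE₁ := eigenspace_eq_of_sup_eq_top T ht₂ hP hQ hPQ
  have hE₂ := eigenspace_eq_of_sup_eq_top T ht₂.symm hQ hP ((sup_comm _ _).trans hPQ)
  have : FiniteDimensional (RatFunc ℚ) V := b.finiteDimensional_of_finite
  classical
  obtain ⟨hr₁, hr₂⟩ := Submodule.finrank_eq_of_sup_eq_top (m := 1) (n := 2)
    ((finrank_span_le_card _).trans (by simp)) ((finrank_span_le_card _).trans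
    (by simpa using Finset.card_le_two)) hPQ (Module.finrank_eq_card_basis b)
  refine ⟨?_, hE₁, hE₁ ▸ hr₁, hE₂, hE₂ ▸ hr₂⟩
  simpa using comp_sub_smul_id_eq_zero_of_sup_eq_top T hP hQ hPQ
end

section
/- Let F = ℚ(u) be the field of rational functions in one variable u over ℚ, and let V be the F-vector space with basis (L, L′₁, L′₂). Let T : V → V be the F-linear operator with T L = L + L′₁ + L′₂, T L′₁ = (u²−1)L + (u²−1)L′₁ − L′₂, and T L′₂ = (u²−1)L − L′₁ + (u²−1)L′₂. Then (T + 1)(T − u²) = 0; the u²-eigenspace of T is the two-dimensional subspace spanned by L + L′₁ and L + L′₂; and the (−1)-eigenspace of T is the one-dimensional subspace spanned by (u²−1)L − L′₁ − L′₂. -/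
/-!
With `q = u²`, the vectors `L + L′₁`, `L + L′₂` are `q`-eigenvectors of `T` and
`w = (q - 1)L − L′₁ − L′₂` is a `(−1)`-eigenvector. Since `w + (L + L′₁) + (L + L′₂) = (q + 1)L`
and `q + 1 ≠ 0`, these three vectors span `V`; as eigenspaces for distinct eigenvalues meet
trivially, the modular law forces each eigenspace to be exactly the span of its eigenvectors.
The quadratic relation is checked on the basis.
-/

open Module Module.End Submodule

section

variable {K V : Type*} [Field K] [AddCommGroup V] [Module K V] {T : End K V} {q : K} {x y z : V}

lemma add_mem_eigenspace_of_apply_eq (hx : T x = x + y + z)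
    (hy : T y = (q - 1) • x + (q - 1) • y - z) : x + y ∈ eigenspace T q := by
  rw [mem_eigenspace_iff, map_add, hx, hy]
  module

lemma span_add_add_le_eigenspace (hx : T x = x + y + z)
    (hy : T y = (q - 1) • x + (q - 1) • y - z) (hz : T z = (q - 1) • x - y + (q - 1) • z) :
    span K {x + y, x + z} ≤ eigenspace T q := by
  have hx' : T x = x + z + y := by rw [hx, add_right_comm]
  have hz' : T z = (q - 1) • x + (q - 1) • z - y := by rw [hz, sub_add_eq_add_sub]
  rw [span_le, Set.pair_subset_iff]
  exact ⟨add_mem_eigenspace_of_apply_eq hx hy, add_mem_eigenspace_of_apply_eq hx' hz'⟩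

lemma span_smul_sub_sub_le_eigenspace_neg_one (hx : T x = x + y + z)
    (hy : T y = (q - 1) • x + (q - 1) • y - z) (hz : T z = (q - 1) • x - y + (q - 1) • z) :
    span K {(q - 1) • x - y - z} ≤ eigenspace T (-1) := by
  rw [span_singleton_le_iff_mem, mem_eigenspace_iff, map_sub, map_sub, map_smul, hx, hy, hz]
  module

lemma eigenspace_eq_of_le_of_sup_eq_top {μ ν : K} (hμν : μ ≠ ν) {A B : Submodule K V}
    (hA : A ≤ eigenspace T μ) (hB : B ≤ eigenspace T ν) (hAB : A ⊔ B = ⊤) :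
    eigenspace T μ = A := by
  refine (eq_of_le_of_inf_le_of_le_sup hA ?_ (hAB ▸ le_top)).symm
  calc eigenspace T μ ⊓ B ≤ eigenspace T μ ⊓ eigenspace T ν := inf_le_inf_left _ hB
    _ = ⊥ := (T.eigenspaces_iSupIndep.pairwiseDisjoint hμν).eq_bot
    _ ≤ A := bot_le

variable (b : Basis (Fin 3) K V)

lemma add_id_comp_sub_smul_id_eq_zero (h1 : T (b 0) = b 0 + b 1 + b 2)
    (h2 : T (b 1) = (q - 1) • b 0 + (q - 1) • b 1 - b 2)
    (h3 : T (b 2) = (q - 1) • b 0 - b 1 + (q - 1) • b 2) :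
    (T + LinearMap.id) ∘ₗ (T - q • LinearMap.id) = 0 := by
  refine b.ext fun i => ?_
  fin_cases i <;> simp [h1, h2, h3] <;> module

lemma linearIndependent_add_add : LinearIndependent K ![b 0 + b 1, b 0 + b 2] := by
  refine LinearIndependent.pair_iff.mpr fun s t hst => ⟨?_, ?_⟩
  · simpa using congr(b.coord 1 $hst)
  · simpa using congr(b.coord 2 $hst)

lemma smul_sub_sub_ne_zero (c : K) : c • b 0 - b 1 - b 2 ≠ 0 := fun h => by
  simpa using congr(b.coord 1 $h)

lemma span_add_add_sup_span_smul_sub_sub_eq_top (hq : q + 1 ≠ 0) :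
    span K {b 0 + b 1, b 0 + b 2} ⊔ span K {(q - 1) • b 0 - b 1 - b 2} = ⊤ := by
  set W := span K {b 0 + b 1, b 0 + b 2} ⊔ span K {(q - 1) • b 0 - b 1 - b 2}
  have h01 : b 0 + b 1 ∈ W := mem_sup_left (subset_span (by simp))
  have h02 : b 0 + b 2 ∈ W := mem_sup_left (subset_span (by simp))
  have hw : (q - 1) • b 0 - b 1 - b 2 ∈ W := mem_sup_right (mem_span_singleton_self _)
  have h0 : b 0 ∈ W := by
    have : (q + 1) • b 0 ∈ W := by
      convert W.add_mem (W.add_mem hw h01) h02 using 1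
      module
    exact (W.smul_mem_iff hq).mp this
  rw [eq_top_iff, ← b.span_eq, span_le, Set.range_subset_iff]
  intro i
  fin_cases i
  · exact h0
  · simpa using W.sub_mem h01 h0
  · simpa using W.sub_mem h02 h0

end

lemma u_sq_add_one_ne_zero : u ^ 2 + 1 ≠ 0 := by
  have h : u ^ 2 + 1 =
      algebraMap (Polynomial ℚ) (RatFunc ℚ) (Polynomial.X ^ 2 + Polynomial.C 1) := by
    simp [u, RatFunc.algebraMap_X]
  exact h ▸ RatFunc.algebraMap_ne_zero (Polynomial.X_pow_add_C_ne_zero two_pos 1)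

/-- Formulas (7.6)(g′′) and (7.6)(h′) of Lusztig–Vogan: on the `ℚ(u)`-vector space with
basis `(L, L′₁, L′₂)`, the operator with `T L = L + L′₁ + L′₂`,
`T L′₁ = (u²−1)L + (u²−1)L′₁ − L′₂`, `T L′₂ = (u²−1)L − L′₁ + (u²−1)L′₂` satisfies
`(T+1)(T−u²) = 0`, its `u²`-eigenspace is the two-dimensional span of `L+L′₁` and
`L+L′₂`, and its `(−1)`-eigenspace is the one-dimensional span of `(u²−1)L − L′₁ − L′₂`. -/
theorem hecke_type_two_imaginary_II_II (V : Type*) [AddCommGroup V]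
    [Module (RatFunc ℚ) V] (b : Module.Basis (Fin 3) (RatFunc ℚ) V)
    (T : V →ₗ[RatFunc ℚ] V)
    (h1 : T (b 0) = b 0 + b 1 + b 2)
    (h2 : T (b 1) = (u ^ 2 - 1) • b 0 + (u ^ 2 - 1) • b 1 - b 2)
    (h3 : T (b 2) = (u ^ 2 - 1) • b 0 - b 1 + (u ^ 2 - 1) • b 2) :
    (T + LinearMap.id) ∘ₗ (T - u ^ 2 • LinearMap.id) = 0 ∧
    Module.End.eigenspace T (u ^ 2) = Submodule.span (RatFunc ℚ) {b 0 + b 1, b 0 + b 2} ∧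
    Module.finrank (RatFunc ℚ) (Module.End.eigenspace T (u ^ 2)) = 2 ∧
    Module.End.eigenspace T (-1) =
      Submodule.span (RatFunc ℚ) {(u ^ 2 - 1) • b 0 - b 1 - b 2} ∧
    Module.finrank (RatFunc ℚ) (Module.End.eigenspace T (-1)) = 1 := by
  have hne : u ^ 2 ≠ -1 := fun h => u_sq_add_one_ne_zero (by rw [h]; ring)
  have hEq := span_add_add_le_eigenspace h1 h2 h3
  have hEneg := span_smul_sub_sub_le_eigenspace_neg_one h1 h2 h3
  have htop := span_add_add_sup_span_smul_sub_sub_eq_top b u_sq_add_one_ne_zero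
  have hEq_eq := eigenspace_eq_of_le_of_sup_eq_top hne hEq hEneg htop
  have hEneg_eq := eigenspace_eq_of_le_of_sup_eq_top hne.symm hEneg hEq (by rwa [sup_comm])
  refine ⟨add_id_comp_sub_smul_id_eq_zero b h1 h2 h3, hEq_eq, ?_, hEneg_eq, ?_⟩
  · rw [hEq_eq, ← Matrix.range_cons_cons_empty,
      finrank_span_eq_card (linearIndependent_add_add b)]
    simp
  · rw [hEneg_eq, finrank_span_singleton (smul_sub_sub_ne_zero b _)]
end

section
/- Let F = ℚ(u) be the field of rational functions in one variable u over ℚ, and let V be the F-vector space with basis (L₁, L₂, L′₁, L′₂). Let T : V → V be the F-linear operator with T L₁ = L₁ + L′₁ + L′₂, T L₂ = L₂ + L′₁ − L′₂, T L′₁ = (u²−1)(L₁+L₂) + (u²−2)L′₁, and T L′₂ = (u²−1)(L₁−L₂) + (u²−2)L′₂. Then (T + 1)(T − u²) = 0; the u²-eigenspace of T is the two-dimensional subspace spanned by L₁ + L₂ + L′₁ and L₁ − L₂ + L′₂; and the (−1)-eigenspace of T is the two-dimensional subspace spanned by (u²−1)L₁ − (L′₁ + L′₂) and (u²−1)L₂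 − (L′₁ − L′₂). -/
namespace Module.End

section Domain

variable {R M : Type*} [CommRing R] [IsDomain R] [AddCommGroup M] [Module R M]
  [IsTorsionFree R M] {T : End R M} {a c : R}

lemma disjoint_eigenspace (T : End R M) (hac : a ≠ c) :
    Disjoint (T.eigenspace a) (T.eigenspace c) :=
  T.disjoint_genEigenspace hac 1 1

lemma eigenspace_eq_of_sup_eq_top_s12 (hac : a ≠ c) {S₁ S₂ : Submodule R M}
    (h₁ : S₁ ≤ T.eigenspace a) (h₂ : S₂ ≤ T.eigenspace c) (hsup : S₁ ⊔ S₂ = ⊤) :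
    T.eigenspace a = S₁ := by
  refine le_antisymm (fun v hv => ?_) h₁
  obtain ⟨y, hy, z, hz, rfl⟩ := Submodule.mem_sup.1 (hsup ▸ Submodule.mem_top : v ∈ S₁ ⊔ S₂)
  have hza : z ∈ T.eigenspace a := by
    simpa using Submodule.sub_mem _ hv (h₁ hy)
  have hz0 : z = 0 := Submodule.disjoint_def.1 (T.disjoint_eigenspace hac) z hza (h₂ hz)
  simpa [hz0] using hy

end Domain

lemma sub_smul_comp_sub_smul_eq_zero {R M : Type*} [CommRing R] [AddCommGroup M] [Module R M]
    {T : End R M} {a c : R} (hsup : T.eigenspace a ⊔ T.eigenspace c = ⊤) :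
    (T - c • LinearMap.id) ∘ₗ (T - a • LinearMap.id) = 0 := by
  ext v
  obtain ⟨y, hy, z, hz, rfl⟩ := Submodule.mem_sup.1 (hsup ▸ Submodule.mem_top : v ∈ _ ⊔ _)
  rw [mem_eigenspace_iff] at hy hz
  simp only [LinearMap.comp_apply, LinearMap.sub_apply, LinearMap.smul_apply, LinearMap.id_apply,
    LinearMap.zero_apply, map_add, map_sub, map_smul, hy, hz]
  module

lemma finrank_eigenspace_add_finrank_eigenspace {K V : Type*} [Field K] [AddCommGroup V]
    [Module K V] [FiniteDimensional K V] {T : End K V} {a c : K} (hac : a ≠ c)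
    (hsup : T.eigenspace a ⊔ T.eigenspace c = ⊤) :
    finrank K (T.eigenspace a) + finrank K (T.eigenspace c) = finrank K V :=
  Submodule.finrank_add_eq_of_isCompl
    ⟨T.disjoint_eigenspace hac, codisjoint_iff.2 hsup⟩

end Module.End

open Module Module.End

/-- The action of `T_{w_ω}` on the basis `(L₁, L₂, L′₁, L′₂)`, with `a` in place of `u²`. -/
structure IsTwoImaginaryAscentAction {K V : Type*} [Field K] [AddCommGroup V] [Module K V]
    (b : Basis (Fin 4) K V) (T : End K V) (a : K) : Prop where
  apply_L₁ : T (b 0) = b 0 + b 2 + b 3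
  apply_L₂ : T (b 1) = b 1 + b 2 - b 3
  apply_L₁' : T (b 2) = (a - 1) • (b 0 + b 1) + (a - 2) • b 2
  apply_L₂' : T (b 3) = (a - 1) • (b 0 - b 1) + (a - 2) • b 3

section

variable {K V : Type*} [Field K] [AddCommGroup V] [Module K V]
  {b : Basis (Fin 4) K V} {T : End K V} {a : K}

namespace IsTwoImaginaryAscentAction

lemma span_le_eigenspace (hT : IsTwoImaginaryAscentAction b T a) :
    Submodule.span K {b 0 + b 1 + b 2, b 0 - b 1 + b 3} ≤ T.eigenspace a := by
  simp only [Submodule.span_le, Set.insert_subset_iff, Set.singleton_subset_iff, SetLike.mem_coe,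
    mem_eigenspace_iff, map_add, map_sub, hT.apply_L₁, hT.apply_L₂, hT.apply_L₁',
    hT.apply_L₂']
  constructor <;> module

lemma span_le_eigenspace_neg_one (hT : IsTwoImaginaryAscentAction b T a) :
    Submodule.span K {(a - 1) • b 0 - (b 2 + b 3), (a - 1) • b 1 - (b 2 - b 3)} ≤
      T.eigenspace (-1) := by
  simp only [Submodule.span_le, Set.insert_subset_iff, Set.singleton_subset_iff, SetLike.mem_coe,
    mem_eigenspace_iff, map_add, map_sub, map_smul, hT.apply_L₁, hT.apply_L₂, hT.apply_L₁',
    hT.apply_L₂']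
  constructor <;> module

end IsTwoImaginaryAscentAction

lemma span_sup_span_eq_top_of_ne_neg_one (ha : a ≠ -1) :
    Submodule.span K {b 0 + b 1 + b 2, b 0 - b 1 + b 3} ⊔
      Submodule.span K {(a - 1) • b 0 - (b 2 + b 3), (a - 1) • b 1 - (b 2 - b 3)} = ⊤ := by
  set S := Submodule.span K {b 0 + b 1 + b 2, b 0 - b 1 + b 3} ⊔
    Submodule.span K {(a - 1) • b 0 - (b 2 + b 3), (a - 1) • b 1 - (b 2 - b 3)}
  have hv₁ : b 0 + b 1 + b 2 ∈ S := Submodule.mem_sup_left (Submodule.subset_span (by simp))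
  have hv₂ : b 0 - b 1 + b 3 ∈ S := Submodule.mem_sup_left (Submodule.subset_span (by simp))
  have hw₁ : (a - 1) • b 0 - (b 2 + b 3) ∈ S :=
    Submodule.mem_sup_right (Submodule.subset_span (by simp))
  have hw₂ : (a - 1) • b 1 - (b 2 - b 3) ∈ S :=
    Submodule.mem_sup_right (Submodule.subset_span (by simp))
  have ha' : a + 1 ≠ 0 := by rwa [← sub_neg_eq_add, sub_ne_zero]
  have h₀ : b 0 ∈ S := by
    rw [← Submodule.smul_mem_iff _ ha']
    convert add_mem (add_mem hv₁ hv₂) hw₁ using 1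
    module
  have h₁ : b 1 ∈ S := by
    rw [← Submodule.smul_mem_iff _ ha']
    convert add_mem (sub_mem hv₁ hv₂) hw₂ using 1
    module
  have h₂ : b 2 ∈ S := by
    convert sub_mem (sub_mem hv₁ h₀) h₁ using 1
    abel
  have h₃ : b 3 ∈ S := by
    convert add_mem (sub_mem hv₂ h₀) h₁ using 1
    abel
  rw [eq_top_iff, ← b.span_eq, Submodule.span_le, Set.range_subset_iff]
  intro i
  fin_cases i <;> assumption

lemma finrank_span_pair_eq_two :
    finrank K (Submodule.span K {b 0 + b 1 + b 2, b 0 - b 1 + b 3}) = 2 := by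
  have hli : LinearIndependent K ![b 0 + b 1 + b 2, b 0 - b 1 + b 3] := by
    refine LinearIndependent.pair_iff.2 fun s t hst => ⟨?_, ?_⟩
    · simpa [Finsupp.single_apply] using congrArg (fun v => b.repr v 2) hst
    · simpa [Finsupp.single_apply] using congrArg (fun v => b.repr v 3) hst
  rw [← Matrix.range_cons_cons_empty, finrank_span_eq_card hli, Fintype.card_fin]

end

lemma u_sq_ne_neg_one : u ^ 2 ≠ -1 := by
  rw [Ne, ← add_eq_zero_iff_eq_neg]
  have h : u ^ 2 + 1 =
      algebraMap (Polynomial ℚ) (RatFunc ℚ) (Polynomial.X ^ 2 + Polynomial.C 1) := by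
    simp [u]
  rw [h]
  exact RatFunc.algebraMap_ne_zero (Polynomial.X_pow_add_C_ne_zero two_pos 1)

/-- Formulas (7.6)(i′′) and (7.6)(j′) of Lusztig–Vogan: on the `ℚ(u)`-vector space with
basis `(L₁, L₂, L′₁, L′₂)`, the operator with `T L₁ = L₁ + L′₁ + L′₂`,
`T L₂ = L₂ + L′₁ − L′₂`, `T L′₁ = (u²−1)(L₁+L₂) + (u²−2)L′₁`,
`T L′₂ = (u²−1)(L₁−L₂) + (u²−2)L′₂` satisfies `(T+1)(T−u²) = 0`, its `u²`-eigenspace is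
the two-dimensional span of `L₁+L₂+L′₁` and `L₁−L₂+L′₂`, and its `(−1)`-eigenspace is the
two-dimensional span of `(u²−1)L₁ − (L′₁+L′₂)` and `(u²−1)L₂ − (L′₁−L′₂)`. -/
theorem hecke_type_two_imaginary_I_II (V : Type*) [AddCommGroup V]
    [Module (RatFunc ℚ) V] (b : Module.Basis (Fin 4) (RatFunc ℚ) V)
    (T : V →ₗ[RatFunc ℚ] V)
    (h1 : T (b 0) = b 0 + b 2 + b 3)
    (h2 : T (b 1) = b 1 + b 2 - b 3)
    (h3 : T (b 2) = (u ^ 2 - 1) • (b 0 + b 1) + (u ^ 2 - 2) • b 2)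
    (h4 : T (b 3) = (u ^ 2 - 1) • (b 0 - b 1) + (u ^ 2 - 2) • b 3) :
    (T + LinearMap.id) ∘ₗ (T - u ^ 2 • LinearMap.id) = 0 ∧
    Module.End.eigenspace T (u ^ 2) =
      Submodule.span (RatFunc ℚ) {b 0 + b 1 + b 2, b 0 - b 1 + b 3} ∧
    Module.finrank (RatFunc ℚ) (Module.End.eigenspace T (u ^ 2)) = 2 ∧
    Module.End.eigenspace T (-1) =
      Submodule.span (RatFunc ℚ)
        {(u ^ 2 - 1) • b 0 - (b 2 + b 3), (u ^ 2 - 1) • b 1 - (b 2 - b 3)} ∧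
    Module.finrank (RatFunc ℚ) (Module.End.eigenspace T (-1)) = 2 := by
  have hT : IsTwoImaginaryAscentAction b T (u ^ 2) := ⟨h1, h2, h3, h4⟩
  have hsup := span_sup_span_eq_top_of_ne_neg_one (b := b) u_sq_ne_neg_one
  have hplus := eigenspace_eq_of_sup_eq_top_s12 u_sq_ne_neg_one hT.span_le_eigenspace
    hT.span_le_eigenspace_neg_one hsup
  have hminus := eigenspace_eq_of_sup_eq_top_s12 u_sq_ne_neg_one.symm hT.span_le_eigenspace_neg_one
    hT.span_le_eigenspace (by rwa [sup_comm])
  have heig : eigenspace T (u ^ 2) ⊔ eigenspace T (-1) = ⊤ := by rw [hplus, hminus, hsup]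
  have : FiniteDimensional (RatFunc ℚ) V := b.finiteDimensional_of_finite
  have hrank := finrank_eigenspace_add_finrank_eigenspace u_sq_ne_neg_one heig
  have hrank_plus : finrank (RatFunc ℚ) (eigenspace T (u ^ 2)) = 2 :=
    hplus ▸ finrank_span_pair_eq_two
  refine ⟨?_, hplus, hrank_plus, hminus, ?_⟩
  · simpa using sub_smul_comp_sub_smul_eq_zero heig
  · rw [finrank_eq_card_basis b, Fintype.card_fin] at hrank
    omega
end
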